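/- For n ≥ 2, p ∈ (0,1) and all θ ≥ 0, the moment generating function M(θ) = E exp(θ(Y-μ)/σ) of the standardized number of isolated vertices satisfies M(θ) ≤ exp(H(θ)), where H(θ) = (μ/(2σ²)) ∫₀^θ s γ_{s/σ} ds and γ_s = e^s (p e^s + 1 - p)^{n-2} (n p e^s + 1 - p) + (n-1)p + 1. -/

import Mathlib

open MeasureTheory ProbabilityTheory Real Finset

noncomputable section

namespace ErdosRenyiIsolated

/-- Index set for the potential edges of a graph on `Fin n`. -/
abbrev EdgeIdx (n : ℕ) := {e : Fin n × Fin n // e.1 < e.2}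

/-- Adjacency relation of the random graph encoded by `ω` : `u` and `v` are adjacent
if the corresponding edge indicator is `true`. -/
def adj {n : ℕ} (ω : EdgeIdx n → Bool) (u v : Fin n) : Prop :=
  if h : u < v then ω ⟨(u, v), h⟩ = true
  else if h' : v < u then ω ⟨(v, u), h'⟩ = true
  else False

instance {n : ℕ} (ω : EdgeIdx n → Bool) (u v : Fin n) : Decidable (adj ω u v) := by
  unfold adj
  split
  · exact inferInstance
  · split
    · exact inferInstance
    · exact inferInstance

/-- Degree of vertex `v` in the graph encoded by `ω`. -/
def deg {n : ℕ} (ω : EdgeIdx n → Bool) (v : Fin n) : ℕ :=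
  (Finset.univ.filter fun w => adj ω v w).card

/-- The number of isolated vertices of the graph encoded by `ω`. -/
def isolCount {n : ℕ} (ω : EdgeIdx n → Bool) : ℕ :=
  (Finset.univ.filter fun v => deg ω v = 0).card

/-- The Bernoulli(p) measure on `Bool`. -/
def bern (p : ℝ) : Measure Bool :=
  ENNReal.ofReal p • Measure.dirac true + ENNReal.ofReal (1 - p) • Measure.dirac false

instance (p : ℝ) : IsFiniteMeasure (bern p) := by
  constructor
  have h : bern p Set.univ ≤ ENNReal.ofReal p + ENNReal.ofReal (1 - p) := by
    simp [bern]
  exact lt_of_le_of_lt h (ENNReal.add_lt_top.mpr ⟨ENNReal.ofReal_lt_top, ENNReal.ofReal_lt_top⟩)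

/-- The Erdős–Rényi random graph measure `G(n,p)`: the edge indicators are i.i.d.
Bernoulli(p). -/
def gnp (n : ℕ) (p : ℝ) : Measure (EdgeIdx n → Bool) :=
  Measure.pi fun _ => bern p

/-- The Erdős–Rényi measure together with an independent uniformly chosen vertex. -/
def gnpV (n : ℕ) (p : ℝ) : Measure ((EdgeIdx n → Bool) × Fin n) :=
  (gnp n p).prod (uniformOn (Set.univ : Set (Fin n)))

/-- Adjacency in the graph obtained by deleting all edges incident to `v'`. -/
def adjDel {n : ℕ} (ω : EdgeIdx n → Bool) (v' u v : Fin n) : Prop :=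
  adj ω u v ∧ u ≠ v' ∧ v ≠ v'

instance {n : ℕ} (ω : EdgeIdx n → Bool) (v' u v : Fin n) : Decidable (adjDel ω v' u v) := by
  unfold adjDel; exact inferInstance

/-- Degree of `v` in the graph `ω` with all edges incident to `v'` deleted. -/
def degDel {n : ℕ} (ω : EdgeIdx n → Bool) (v' v : Fin n) : ℕ :=
  (Finset.univ.filter fun w => adjDel ω v' v w).card

/-- Number of isolated vertices in the graph `ω` with all edges incident to `v'` deleted. -/
def isolCountDel {n : ℕ} (ω : EdgeIdx n → Bool) (v' : Fin n) : ℕ :=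
  (Finset.univ.filter fun v => degDel ω v' v = 0).card

/-!
Let `L t = E exp (t Y)`. Writing `Y = ∑ v, 1{d(v) = 0}`: on the event `d(v) = 0`, `Y` equals the
number `Y⁽ᵛ⁾` of isolated vertices after deleting the edges at `v`, which does not depend on those
`n - 1` edges, so `E[1{d(v) = 0} exp (t Y)] = (1 - p)^(n-1) E exp (t Y⁽ᵛ⁾)`. Since
`Y ≤ Y⁽ᵛ⁾ ≤ Y + d(v) + 1`, the trapezoid bound `eᵇ - eᵃ ≤ (b - a)(eᵃ + eᵇ)/2` and Harris' inequality
(`d(v)` increases and `exp (t Y)` decreases with the edge set) give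
`E[Y exp (t Y)] ≤ μ (1 + t γ_t / 2) L t`. For the standardized mgf this reads `M' ≤ H' M` on
`[0, ∞)`, and `M 0 = 1`, `H 0 = 0`.
-/

section BernoulliWeights

variable {ι : Type*} [Fintype ι]

def bernWeight (p : ℝ) (ω : ι → Bool) : ℝ := ∏ i, if ω i then p else 1 - p

lemma bernWeight_nonneg {p : ℝ} (hp : p ∈ Set.Icc (0 : ℝ) 1) (ω : ι → Bool) :
    0 ≤ bernWeight p ω :=
  prod_nonneg fun i _ => by split_ifs <;> linarith [hp.1, hp.2]

lemma bern_singleton (p : ℝ) (b : Bool) :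
    bern p {b} = ENNReal.ofReal (if b then p else 1 - p) := by
  cases b <;> simp [bern]

lemma bernWeight_mul_bernWeight (p : ℝ) (a b : ι → Bool) :
    bernWeight p a * bernWeight p b = bernWeight p (a ⊓ b) * bernWeight p (a ⊔ b) := by
  simp only [bernWeight, ← prod_mul_distrib, Pi.inf_apply, Pi.sup_apply]
  exact Fintype.prod_congr _ _ fun i => by
    rcases Bool.eq_false_or_eq_true (a i) with h₁ | h₁ <;>
      rcases Bool.eq_false_or_eq_true (b i) with h₂ | h₂ <;> simp [h₁, h₂, mul_comm]

variable [DecidableEq ι]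

lemma integral_pi_bern {p : ℝ} (hp : p ∈ Set.Icc (0 : ℝ) 1) (f : (ι → Bool) → ℝ) :
    ∫ ω, f ω ∂(Measure.pi fun _ : ι => bern p) = ∑ ω, bernWeight p ω * f ω := by
  rw [integral_fintype .of_finite]
  refine sum_congr rfl fun ω _ => ?_
  rw [smul_eq_mul, measureReal_def, ← Set.univ_pi_singleton, Measure.pi_pi]
  simp_rw [bern_singleton]
  rw [← ENNReal.ofReal_prod_of_nonneg fun i _ => by split_ifs <;> linarith [hp.1, hp.2]]
  exact congrArg (· * f ω) (ENNReal.toReal_ofReal (bernWeight_nonneg hp ω))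

lemma sum_bernWeight_mul_prod (p : ℝ) (S : Finset ι) (c : ι → Bool → ℝ) :
    ∑ ω, bernWeight p ω * ∏ i ∈ S, c i (ω i) =
      ∏ i ∈ S, (p * c i true + (1 - p) * c i false) := by
  have h : ∀ ω : ι → Bool, bernWeight p ω * ∏ i ∈ S, c i (ω i)
      = ∏ i, (if ω i then p else 1 - p) * (if i ∈ S then c i (ω i) else 1) := by
    intro ω
    rw [prod_mul_distrib, bernWeight, Fintype.prod_ite_mem]
  simp_rw [h]
  rw [← Fintype.prod_sum fun i b => (if b then p else 1 - p) * (if i ∈ S then c i b else 1),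
    ← Fintype.prod_ite_mem S]
  refine Fintype.prod_congr _ _ fun i => ?_
  split_ifs <;> simp

lemma sum_bernWeight (p : ℝ) : ∑ ω : ι → Bool, bernWeight p ω = 1 := by
  simpa using sum_bernWeight_mul_prod p ∅ fun _ _ => 1

lemma sum_bernWeight_mul_pow_card_filter (p x : ℝ) (S : Finset ι) :
    ∑ ω, bernWeight p ω * x ^ #{i ∈ S | ω i} = (p * x + 1 - p) ^ #S := by
  have h := sum_bernWeight_mul_prod p S fun _ b => if b then x else 1
  simp only [prod_ite, prod_const_one, prod_const, mul_one, if_true] at h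
  simpa [add_sub_assoc] using h

lemma sum_bernWeight_mul_succ_mul_pow_succ (p x : ℝ) {S : Finset ι} {m : ℕ} (hS : #S = m + 1) :
    ∑ ω, bernWeight p ω * ((#{i ∈ S | ω i} + 1 : ℝ) * x ^ (#{i ∈ S | ω i} + 1)) =
      x * (p * x + 1 - p) ^ m * ((m + 2) * p * x + 1 - p) := by
  set k : (ι → Bool) → ℕ := fun ω => #{i ∈ S | ω i}
  have hsum : ∀ y, HasDerivAt (fun y => ∑ ω, bernWeight p ω * y ^ (k ω + 1))
      (∑ ω, bernWeight p ω * ((k ω + 1 : ℝ) * y ^ k ω)) y := fun y =>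
    HasDerivAt.fun_sum fun ω _ => by
      simpa using (hasDerivAt_pow (k ω + 1) y).const_mul (bernWeight p ω)
  have hclosed : (fun y => ∑ ω, bernWeight p ω * y ^ (k ω + 1)) =
      fun y => y * (p * y + 1 - p) ^ (m + 1) := by
    funext y
    simp_rw [pow_succ, ← mul_assoc, ← sum_mul, k, sum_bernWeight_mul_pow_card_filter, hS, pow_succ]
    ring
  have hlin : HasDerivAt (fun y => p * y + 1 - p) p x := by
    simpa using ((hasDerivAt_id x).const_mul p).add_const (1 - p)
  have hpoly := (hasDerivAt_id' x).fun_mul (hlin.fun_pow (m + 1))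
  have hderiv := (hsum x).unique (hclosed ▸ hpoly)
  calc ∑ ω, bernWeight p ω * ((k ω + 1 : ℝ) * x ^ (k ω + 1))
      = x * ∑ ω, bernWeight p ω * ((k ω + 1 : ℝ) * x ^ k ω) := by
        rw [mul_sum]; exact sum_congr rfl fun ω _ => by ring
    _ = x * (p * x + 1 - p) ^ m * ((m + 2) * p * x + 1 - p) := by
        rw [hderiv]; push_cast [Nat.add_sub_cancel]; ring

lemma bernWeight_update_mul (p : ℝ) (ω : ι → Bool) (i : ι) (b : Bool) :
    bernWeight p (Function.update ω i b) * (if ω i then p else 1 - p) =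
      bernWeight p ω * (if b then p else 1 - p) := by
  simp only [bernWeight, ← mul_prod_erase univ _ (mem_univ i), Function.update_self]
  rw [prod_congr rfl fun j hj => by rw [Function.update_of_ne (ne_of_mem_erase hj)]]
  ring

lemma sum_bernWeight_mul_ite_eq_false (p : ℝ) (i : ι) (g : (ι → Bool) → ℝ)
    (hg : ∀ ω b, g (Function.update ω i b) = g ω) :
    ∑ ω, bernWeight p ω * (if ω i = false then g ω else 0) =
      (1 - p) * ∑ ω, bernWeight p ω * g ω := by
  -- Flipping coordinate `i` swaps the two halves of the sum and rescales weights by `p / (1 - p)`.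
  let flip : Equiv.Perm (ι → Bool) :=
    Function.Involutive.toPerm (fun ω => Function.update ω i (!ω i)) fun ω => by simp
  have hsplit : ∑ ω, bernWeight p ω * g ω = ∑ ω, bernWeight p ω * (if ω i = false then g ω else 0)
      + ∑ ω, bernWeight p ω * (if ω i = true then g ω else 0) := by
    rw [← sum_add_distrib]
    exact sum_congr rfl fun ω _ => by cases ω i <;> simp
  have hflip : (1 - p) * ∑ ω, bernWeight p ω * (if ω i = true then g ω else 0) =
      p * ∑ ω, bernWeight p ω * (if ω i = false then g ω else 0) := by
    rw [← Equiv.sum_comp flip, mul_sum, mul_sum]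
    refine sum_congr rfl fun ω _ => ?_
    have h := bernWeight_update_mul p ω i (!ω i)
    have hflipω : flip ω = Function.update ω i (!ω i) := rfl
    rw [hflipω, hg, Function.update_self]
    cases hω : ω i <;>
      simp only [hω, Bool.not_false, Bool.not_true, Bool.false_eq_true, ↓reduceIte] at h ⊢
    · linear_combination g ω * h
    · simp
  linear_combination (p - 1) * hsplit - hflip

lemma sum_bernWeight_mul_ite_forall_eq_false (p : ℝ) (S : Finset ι) (g : (ι → Bool) → ℝ)
    (hg : ∀ ω, ∀ i ∈ S, ∀ b, g (Function.update ω i b) = g ω) :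
    ∑ ω, bernWeight p ω * (if ∀ i ∈ S, ω i = false then g ω else 0) =
      (1 - p) ^ #S * ∑ ω, bernWeight p ω * g ω := by
  induction S using Finset.induction_on with
  | empty => simp
  | insert i S hi ih =>
    have hrest : ∀ ω b, (∀ j ∈ S, Function.update ω i b j = false) ↔ ∀ j ∈ S, ω j = false :=
      fun ω b => forall₂_congr fun j hj => by
        rw [Function.update_of_ne (ne_of_mem_of_not_mem hj hi)]
    simp_rw [forall_mem_insert, ite_and]
    rw [sum_bernWeight_mul_ite_eq_false p i _ fun ω b => by
        simp only [hrest, hg ω i (mem_insert_self i S)],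
      ih fun ω j hj => hg ω j (mem_insert_of_mem hj), card_insert_of_notMem hi, pow_succ]
    ring

/-- Harris' inequality. -/
lemma sum_bernWeight_mul_mul_le {p : ℝ} (hp : p ∈ Set.Icc (0 : ℝ) 1)
    {f g : (ι → Bool) → ℝ} (hf₀ : 0 ≤ f) (hf : Monotone f) (hg : Antitone g) :
    ∑ ω, bernWeight p ω * (f ω * g ω) ≤
      (∑ ω, bernWeight p ω * f ω) * ∑ ω, bernWeight p ω * g ω := by
  have h := fkg (μ := bernWeight p) (f := f) (g := fun ω => g ⊥ - g ω)
    (bernWeight_nonneg hp) hf₀ (fun ω => sub_nonneg.2 (hg bot_le)) hf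
    (fun a b hab => sub_le_sub_left (hg hab) _)
    (fun a b => (bernWeight_mul_bernWeight p a b).le)
  simp only [mul_sub, ← mul_assoc, sum_sub_distrib, ← sum_mul, sum_bernWeight, one_mul] at h ⊢
  linarith

end BernoulliWeights

section Calculus

lemma exp_sub_exp_le {a b : ℝ} (hab : a ≤ b) :
    exp b - exp a ≤ (b - a) * (exp a + exp b) / 2 := by
  let F : ℝ → ℝ := fun x => (x - a) * (exp a + exp x) / 2 - (exp x - exp a)
  have hF : ∀ x, HasDerivAt F ((exp a + exp x) / 2 + (x - a) * exp x / 2 - exp x) x := fun x => by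
    refine (((((hasDerivAt_id x).sub_const a).mul ((hasDerivAt_exp x).const_add (exp a))).div_const
      2).sub ((hasDerivAt_exp x).sub_const (exp a))).congr_deriv ?_
    simp only [id]
    ring
  have hmono : MonotoneOn F (Set.Ici a) := by
    refine monotoneOn_of_deriv_nonneg (convex_Ici a)
      (fun x _ => (hF x).continuousAt.continuousWithinAt)
      (fun x _ => (hF x).differentiableAt.differentiableWithinAt) fun x _ => ?_
    have hexp : exp x * (1 + (a - x)) ≤ exp a := by
      have := mul_le_mul_of_nonneg_left (add_one_le_exp (a - x)) (exp_pos x).le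
      rwa [← exp_add, add_sub_cancel, add_comm] at this
    rw [(hF x).deriv]
    nlinarith
  have := hmono Set.self_mem_Ici hab hab
  simp only [F, sub_self, zero_mul, zero_div] at this
  linarith

lemma exp_mul_le_of_le_of_le_add {t y z d : ℝ} (ht : 0 ≤ t) (hyz : y ≤ z) (hzd : z ≤ y + d) :
    exp (t * z) ≤ (1 + t / 2 * (d * (exp (t * d) + 1))) * exp (t * y) := by
  have hd : 0 ≤ d := by linarith
  have hexp : exp (t * z) ≤ exp (t * d) * exp (t * y) := by
    rw [← exp_add]; exact exp_le_exp.2 (by nlinarith)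
  have hmean := exp_sub_exp_le (mul_le_mul_of_nonneg_left hyz ht)
  have hgap : t * z - t * y ≤ t * d := by nlinarith
  have := mul_le_mul hgap (add_le_add_left hexp (exp (t * y))) (by positivity) (by positivity)
  nlinarith

lemma hasDerivAt_sum_mul_exp_mul {α : Type*} (s : Finset α) (w X : α → ℝ) (θ : ℝ) :
    HasDerivAt (fun θ => ∑ a ∈ s, w a * exp (θ * X a)) (∑ a ∈ s, w a * (X a * exp (θ * X a))) θ :=
  HasDerivAt.fun_sum fun a _ => by
    simpa [mul_comm] using (((hasDerivAt_id θ).mul_const (X a)).exp).const_mul (w a)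

lemma le_mul_exp_sub_of_hasDerivAt_le_mul {f f' g g' : ℝ → ℝ} (hf : ∀ x, HasDerivAt f (f' x) x)
    (hg : ∀ x, HasDerivAt g (g' x) x) (hle : ∀ x, 0 < x → f' x ≤ g' x * f x) {x : ℝ}
    (hx : 0 ≤ x) : f x ≤ f 0 * exp (g x - g 0) := by
  let ψ : ℝ → ℝ := fun x => f x * exp (-g x)
  have hψ : ∀ x, HasDerivAt ψ ((f' x - g' x * f x) * exp (-g x)) x := fun x => by
    refine ((hf x).fun_mul (hg x).neg.exp).congr_deriv ?_
    simp only [Pi.neg_apply]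
    ring
  have hanti : AntitoneOn ψ (Set.Ici 0) := by
    refine antitoneOn_of_deriv_nonpos (convex_Ici 0)
      (fun x _ => (hψ x).continuousAt.continuousWithinAt)
      (fun x _ => (hψ x).differentiableAt.differentiableWithinAt) fun x hx => ?_
    rw [interior_Ici] at hx
    rw [(hψ x).deriv]
    exact mul_nonpos_of_nonpos_of_nonneg (sub_nonpos.2 (hle x hx)) (exp_pos _).le
  have := hanti Set.self_mem_Ici hx hx
  calc f x = f x * exp (-g x) * exp (g x) := by
        rw [mul_assoc, ← exp_add, neg_add_cancel, exp_zero, mul_one]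
    _ ≤ f 0 * exp (-g 0) * exp (g x) := mul_le_mul_of_nonneg_right this (exp_pos _).le
    _ = f 0 * exp (g x - g 0) := by rw [mul_assoc, ← exp_add, neg_add_eq_sub]

end Calculus

section Graph

variable {n : ℕ}

lemma adj_comm (ω : EdgeIdx n → Bool) (u w : Fin n) : adj ω u w ↔ adj ω w u := by
  unfold adj
  rcases lt_trichotomy u w with h | rfl | h
  · simp [h, h.not_gt]
  · rfl
  · simp [h, h.not_gt]

lemma not_adj_self (ω : EdgeIdx n → Bool) (u : Fin n) : ¬adj ω u u := by
  simp [adj]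

lemma adj_mono {ω ω' : EdgeIdx n → Bool} (h : ω ≤ ω') {u w : Fin n} (huw : adj ω u w) :
    adj ω' u w := by
  unfold adj at huw ⊢
  split_ifs at huw ⊢ <;> simp_all [Bool.le_iff_imp.1 (h _)]

def incEdges (v : Fin n) : Finset (EdgeIdx n) := {e | e.1.1 = v ∨ e.1.2 = v}

lemma deg_eq_card_filter_incEdges (ω : EdgeIdx n → Bool) (v : Fin n) :
    deg ω v = #{e ∈ incEdges v | ω e} := by
  refine card_bij' (fun w hw => ⟨(min v w, max v w), min_lt_max.2 ?_⟩)
    (fun e _ => if e.1.1 = v then e.1.2 else e.1.1) ?_ ?_ ?_ ?_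
  · rintro rfl; simp [not_adj_self] at hw
  · intro w hw
    simp only [mem_filter, mem_univ, true_and, incEdges] at hw ⊢
    unfold adj at hw
    split_ifs at hw with h₁ h₂
    · simp [min_eq_left h₁.le, max_eq_right h₁.le, hw]
    · simp [min_eq_right h₂.le, max_eq_left h₂.le, hw]
  · rintro ⟨⟨a, b⟩, hab⟩ he
    simp only [mem_filter, mem_univ, true_and, incEdges] at he ⊢
    rcases he with ⟨rfl | rfl, he⟩
    · simp [adj, hab, he]
    · simp [adj, hab, hab.not_gt, hab.ne, he]
  · intro w hw
    simp only [mem_filter, mem_univ, true_and] at hw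
    rcases lt_trichotomy v w with h | rfl | h
    · simp [min_eq_left h.le, max_eq_right h.le]
    · exact absurd hw (not_adj_self ω v)
    · simp [min_eq_right h.le, h.ne]
  · rintro ⟨⟨a, b⟩, hab⟩ he
    simp only [mem_filter, mem_univ, true_and, incEdges] at he
    rcases he with ⟨rfl | rfl, -⟩
    · simp [min_eq_left hab.le, max_eq_right hab.le]
    · simp [hab.ne, min_eq_right hab.le, max_eq_left hab.le]

lemma deg_eq_zero_iff_forall_not_adj (ω : EdgeIdx n → Bool) (u : Fin n) :
    deg ω u = 0 ↔ ∀ w, ¬adj ω u w := by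
  simp [deg, filter_eq_empty_iff]

lemma deg_eq_zero_iff (ω : EdgeIdx n → Bool) (v : Fin n) :
    deg ω v = 0 ↔ ∀ e ∈ incEdges v, ω e = false := by
  simp [deg_eq_card_filter_incEdges, filter_eq_empty_iff]

lemma degDel_eq_zero_iff (ω : EdgeIdx n → Bool) (v u : Fin n) :
    degDel ω v u = 0 ↔ ∀ w, adj ω u w → u = v ∨ w = v := by
  rw [degDel, card_eq_zero, filter_eq_empty_iff]
  simp [adjDel, or_iff_not_imp_left]

lemma card_incEdges (v : Fin n) : #(incEdges v) = n - 1 := by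
  have h := deg_eq_card_filter_incEdges (fun _ => true) v
  rw [filter_true_of_mem fun _ _ => rfl] at h
  have hcomplete : univ.filter (adj (fun _ => true) v) = univ.erase v := by
    ext w
    rcases lt_trichotomy v w with hlt | rfl | hlt
    · simp [adj, hlt, hlt.ne']
    · simp [not_adj_self]
    · simp [adj, hlt, hlt.not_gt, hlt.ne]
  rw [← h, deg, hcomplete, card_erase_of_mem (mem_univ v), card_fin]

lemma deg_mono (v : Fin n) : Monotone fun ω : EdgeIdx n → Bool => deg ω v :=
  fun _ _ h => card_le_card <| monotone_filter_right _ fun _ _ => adj_mono h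

lemma isolCount_anti : Antitone (isolCount (n := n)) := fun _ _ h =>
  card_le_card <| monotone_filter_right _ fun u _ hu =>
    Nat.eq_zero_of_le_zero (hu ▸ deg_mono u h)

lemma degDel_le_deg (ω : EdgeIdx n → Bool) (v u : Fin n) : degDel ω v u ≤ deg ω u :=
  card_le_card <| monotone_filter_right _ fun _ _ h => h.1

lemma isolCount_le_isolCountDel (ω : EdgeIdx n → Bool) (v : Fin n) :
    isolCount ω ≤ isolCountDel ω v :=
  card_le_card <| monotone_filter_right _ fun u _ hu =>
    Nat.eq_zero_of_le_zero (hu ▸ degDel_le_deg ω v u)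

lemma isolCountDel_le (ω : EdgeIdx n → Bool) (v : Fin n) :
    isolCountDel ω v ≤ isolCount ω + deg ω v + 1 := by
  have hsub : univ.filter (degDel ω v · = 0) ⊆
      (univ.filter (deg ω · = 0) ∪ univ.filter (adj ω v)) ∪ {v} := by
    intro u hu
    simp only [mem_filter, mem_univ, true_and, mem_union, mem_singleton,
      degDel_eq_zero_iff, deg_eq_zero_iff_forall_not_adj] at hu ⊢
    by_cases huv : u = v
    · exact Or.inr huv
    refine Or.inl (or_iff_not_imp_left.2 fun hdeg => ?_)
    obtain ⟨w, hw⟩ := not_forall_not.1 hdeg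
    exact ((hu w hw).resolve_left huv) ▸ (adj_comm ω u w).1 hw
  calc isolCountDel ω v ≤ #((univ.filter (deg ω · = 0) ∪ univ.filter (adj ω v)) ∪ {v}) :=
        card_le_card hsub
    _ ≤ isolCount ω + deg ω v + 1 :=
      (card_union_le _ _).trans (Nat.add_le_add_right (card_union_le _ _) _)

lemma isolCountDel_eq_of_deg_eq_zero {ω : EdgeIdx n → Bool} {v : Fin n} (h : deg ω v = 0) :
    isolCountDel ω v = isolCount ω := by
  have hv := (deg_eq_zero_iff_forall_not_adj ω v).1 h
  have hadj : ∀ u w, adjDel ω v u w ↔ adj ω u w := fun u w =>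
    ⟨And.left, fun huw => ⟨huw, fun huv => hv w (huv ▸ huw),
      fun hwv => hv u (hwv ▸ (adj_comm ω u w).1 huw)⟩⟩
  have hdeg : ∀ u, degDel ω v u = deg ω u := fun u =>
    congr_arg card (filter_congr fun w _ => hadj u w)
  exact congr_arg card (filter_congr fun u _ => by rw [hdeg u])

lemma adjDel_update {ω : EdgeIdx n → Bool} {v : Fin n} {e : EdgeIdx n} (he : e ∈ incEdges v)
    (b : Bool) (u w : Fin n) : adjDel (Function.update ω e b) v u w ↔ adjDel ω v u w := by
  simp only [incEdges, mem_filter, mem_univ, true_and] at he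
  unfold adjDel adj
  split_ifs <;> simp only [and_congr_left_iff] <;> intro hu
  all_goals rw [Function.update_of_ne]; rintro rfl; rcases he with he | he <;> simp_all

lemma isolCountDel_update {ω : EdgeIdx n → Bool} {v : Fin n} {e : EdgeIdx n}
    (he : e ∈ incEdges v) (b : Bool) :
    isolCountDel (Function.update ω e b) v = isolCountDel ω v := by
  have hdeg : ∀ u, degDel (Function.update ω e b) v u = degDel ω v u := fun u =>
    congr_arg card (filter_congr fun w _ => adjDel_update he b u w)
  exact congr_arg card (filter_congr fun u _ => by rw [hdeg u])

end Graph

section IsolatedVertices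

variable {n : ℕ} {p : ℝ}

def isolGamma (n : ℕ) (p t : ℝ) : ℝ :=
  Real.exp t * (p * Real.exp t + 1 - p) ^ (n - 2) * ((n : ℝ) * p * Real.exp t + 1 - p)
    + ((n : ℝ) - 1) * p + 1

def isolMgf (n : ℕ) (p t : ℝ) : ℝ :=
  ∑ ω : EdgeIdx n → Bool, bernWeight p ω * exp (t * isolCount ω)

lemma sum_bernWeight_mul_deg_succ_mul_exp_add_one (hn : 2 ≤ n) (t : ℝ) (v : Fin n) :
    ∑ ω, bernWeight p ω * ((deg ω v + 1 : ℝ) * (exp (t * (deg ω v + 1)) + 1)) =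
      isolGamma n p t := by
  have hcard : #(incEdges v) = n - 2 + 1 := by rw [card_incEdges]; omega
  have hmoment := fun x => sum_bernWeight_mul_succ_mul_pow_succ p x hcard
  simp only [← deg_eq_card_filter_incEdges] at hmoment
  have hone := hmoment 1
  simp only [one_pow, mul_one] at hone
  have hexp : ∀ d : ℕ, exp (t * (d + 1)) = exp t ^ (d + 1) := fun d => by
    rw [← exp_nat_mul]; push_cast; ring_nf
  simp_rw [hexp, mul_add, mul_one, sum_add_distrib, hmoment, hone, isolGamma]
  push_cast [Nat.cast_sub hn]
  ring

lemma sum_bernWeight_mul_ite_deg_eq_zero (t : ℝ) (v : Fin n) :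
    ∑ ω, bernWeight p ω * (if deg ω v = 0 then exp (t * isolCount ω) else 0) =
      (1 - p) ^ (n - 1) * ∑ ω, bernWeight p ω * exp (t * isolCountDel ω v) := by
  have hdel : ∀ ω : EdgeIdx n → Bool,
      (if deg ω v = 0 then exp (t * isolCount ω) else 0) =
        if ∀ e ∈ incEdges v, ω e = false then exp (t * isolCountDel ω v) else 0 := fun ω => by
    by_cases h : deg ω v = 0
    · rw [if_pos h, if_pos ((deg_eq_zero_iff ω v).1 h), isolCountDel_eq_of_deg_eq_zero h]
    · rw [if_neg h, if_neg (mt (deg_eq_zero_iff ω v).2 h)]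
  simp_rw [hdel]
  rw [sum_bernWeight_mul_ite_forall_eq_false p _ _ fun ω e he b => by
    rw [isolCountDel_update he], card_incEdges]

lemma sum_bernWeight_mul_exp_isolCountDel_le (hn : 2 ≤ n) (hp : p ∈ Set.Icc (0 : ℝ) 1)
    {t : ℝ} (ht : 0 ≤ t) (v : Fin n) :
    ∑ ω, bernWeight p ω * exp (t * isolCountDel ω v) ≤
      (1 + t / 2 * isolGamma n p t) * isolMgf n p t := by
  set f : (EdgeIdx n → Bool) → ℝ := fun ω => (deg ω v + 1 : ℝ) * (exp (t * (deg ω v + 1)) + 1)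
  have hf₀ : 0 ≤ f := fun ω => by positivity
  have hf : Monotone f := fun ω ω' h => by
    have hd : (deg ω v : ℝ) ≤ deg ω' v := by exact_mod_cast deg_mono v h
    have he : exp (t * (deg ω v + 1)) ≤ exp (t * (deg ω' v + 1)) := by gcongr
    simp only [f]; gcongr
  have hg : Antitone fun ω : EdgeIdx n → Bool => exp (t * isolCount ω) := fun ω ω' h =>
    exp_le_exp.2 (mul_le_mul_of_nonneg_left (by exact_mod_cast isolCount_anti h) ht)
  have hpoint : ∀ ω, exp (t * isolCountDel ω v) ≤ (1 + t / 2 * f ω) * exp (t * isolCount ω) :=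
    fun ω => exp_mul_le_of_le_of_le_add ht
      (by exact_mod_cast isolCount_le_isolCountDel ω v)
      (by exact_mod_cast (isolCountDel_le ω v).trans_eq (add_assoc _ _ _))
  calc ∑ ω, bernWeight p ω * exp (t * isolCountDel ω v)
      ≤ ∑ ω, bernWeight p ω * ((1 + t / 2 * f ω) * exp (t * isolCount ω)) :=
        sum_le_sum fun ω _ => mul_le_mul_of_nonneg_left (hpoint ω) (bernWeight_nonneg hp ω)
    _ = isolMgf n p t + t / 2 * ∑ ω, bernWeight p ω * (f ω * exp (t * isolCount ω)) := by
        rw [isolMgf, mul_sum, ← sum_add_distrib]; exact sum_congr rfl fun ω _ => by ring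
    _ ≤ isolMgf n p t + t / 2 * ((∑ ω, bernWeight p ω * f ω) * isolMgf n p t) := by
        gcongr; exact sum_bernWeight_mul_mul_le hp hf₀ hf hg
    _ = (1 + t / 2 * isolGamma n p t) * isolMgf n p t := by
        rw [sum_bernWeight_mul_deg_succ_mul_exp_add_one hn]; ring

lemma sum_bernWeight_mul_isolCount_mul_exp_le (hn : 2 ≤ n) (hp : p ∈ Set.Icc (0 : ℝ) 1)
    {t : ℝ} (ht : 0 ≤ t) :
    ∑ ω : EdgeIdx n → Bool, bernWeight p ω * (isolCount ω * exp (t * isolCount ω)) ≤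
      n * (1 - p) ^ (n - 1) * ((1 + t / 2 * isolGamma n p t) * isolMgf n p t) := by
  have hY : ∀ ω : EdgeIdx n → Bool, bernWeight p ω * (isolCount ω * exp (t * isolCount ω)) =
      ∑ v, bernWeight p ω * (if deg ω v = 0 then exp (t * isolCount ω) else 0) := fun ω => by
    rw [isolCount, natCast_card_filter, sum_mul, mul_sum]
    simp only [ite_mul, one_mul, zero_mul]
  simp_rw [hY]
  rw [sum_comm]
  calc _ ≤ ∑ _v : Fin n, (1 - p) ^ (n - 1) * ((1 + t / 2 * isolGamma n p t) * isolMgf n p t) :=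
        sum_le_sum fun v _ => by
          rw [sum_bernWeight_mul_ite_deg_eq_zero]
          exact mul_le_mul_of_nonneg_left (sum_bernWeight_mul_exp_isolCountDel_le hn hp ht v)
            (pow_nonneg (by linarith [hp.2]) _)
    _ = _ := by rw [sum_const, card_univ, Fintype.card_fin, nsmul_eq_mul, mul_assoc]

lemma sum_bernWeight_mul_standardized_mul_exp_le (hn : 2 ≤ n) (hp : p ∈ Set.Icc (0 : ℝ) 1)
    {μ σ θ : ℝ} (hμ : μ = n * (1 - p) ^ (n - 1)) (hσ : 0 < σ) (hθ : 0 ≤ θ) :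
    ∑ ω : EdgeIdx n → Bool,
        bernWeight p ω * ((isolCount ω - μ) / σ * exp (θ * ((isolCount ω - μ) / σ))) ≤
      μ / (2 * σ ^ 2) * (θ * isolGamma n p (θ / σ)) *
        ∑ ω : EdgeIdx n → Bool, bernWeight p ω * exp (θ * ((isolCount ω - μ) / σ)) := by
  set t := θ / σ
  set c := exp (-(t * μ))
  have hexp : ∀ ω : EdgeIdx n → Bool,
      exp (θ * ((isolCount ω - μ) / σ)) = c * exp (t * isolCount ω) := fun ω => by
    rw [← exp_add]; congr 1; ring
  have hmgf : ∑ ω : EdgeIdx n → Bool, bernWeight p ω * exp (θ * ((isolCount ω - μ) / σ)) =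
      c * isolMgf n p t := by
    simp_rw [hexp, isolMgf, mul_sum]; exact sum_congr rfl fun ω _ => by ring
  have hderiv : ∑ ω : EdgeIdx n → Bool,
        bernWeight p ω * ((isolCount ω - μ) / σ * exp (θ * ((isolCount ω - μ) / σ))) =
      c / σ * (∑ ω : EdgeIdx n → Bool, bernWeight p ω * (isolCount ω * exp (t * isolCount ω))
        - μ * isolMgf n p t) := by
    simp_rw [hexp, isolMgf, mul_sum, ← sum_sub_distrib, mul_sum]
    exact sum_congr rfl fun ω _ => by ring
  have key := sum_bernWeight_mul_isolCount_mul_exp_le hn hp (div_nonneg hθ hσ.le)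
  rw [← hμ] at key
  rw [hmgf, hderiv]
  calc c / σ * (∑ ω : EdgeIdx n → Bool, bernWeight p ω * (isolCount ω * exp (t * isolCount ω))
        - μ * isolMgf n p t)
      ≤ c / σ * (μ * (t / 2 * isolGamma n p t) * isolMgf n p t) := by
        gcongr; linarith
    _ = μ / (2 * σ ^ 2) * (θ * isolGamma n p t) * (c * isolMgf n p t) := by
        simp only [t]; field_simp

lemma isolVariance_pos (hn : 2 ≤ n) (hp : p ∈ Set.Ioo (0 : ℝ) 1) :
    0 < (n : ℝ) * (1 - p) ^ (n - 1) * (1 + n * p * (1 - p) ^ (n - 2) - (1 - p) ^ (n - 2)) := by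
  obtain ⟨hp₀, hp₁⟩ := hp
  have hq₀ : 0 < 1 - p := sub_pos.2 hp₁
  have hq : (1 - p) ^ (n - 2) ≤ 1 := pow_le_one₀ hq₀.le (by linarith)
  have hn₀ : (0 : ℝ) < n := by exact_mod_cast (by omega : 0 < n)
  have : 0 < (n : ℝ) * p * (1 - p) ^ (n - 2) := by positivity
  have : 0 < (n : ℝ) * (1 - p) ^ (n - 1) := by positivity
  nlinarith

end IsolatedVertices

/-- the mgf of the standardized number of isolated vertices satisfies
`M(θ) ≤ exp (H θ)` for `θ ≥ 0`. -/
theorem mgf_bound_nonneg (n : ℕ) (hn : 2 ≤ n) (p : ℝ) (hp : p ∈ Set.Ioo (0 : ℝ) 1)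
    (μ σ : ℝ) (hμ : μ = (n : ℝ) * (1 - p) ^ (n - 1))
    (hσ : σ = Real.sqrt ((n : ℝ) * (1 - p) ^ (n - 1)
      * (1 + (n : ℝ) * p * (1 - p) ^ (n - 2) - (1 - p) ^ (n - 2))))
    (γ : ℝ → ℝ)
    (hγ : ∀ s, γ s = Real.exp s * (p * Real.exp s + 1 - p) ^ (n - 2)
      * ((n : ℝ) * p * Real.exp s + 1 - p) + ((n : ℝ) - 1) * p + 1)
    (H : ℝ → ℝ) (hH : ∀ θ, H θ = μ / (2 * σ ^ 2) * ∫ s in (0 : ℝ)..θ, s * γ (s / σ))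
    (M : ℝ → ℝ)
    (hM : ∀ θ, M θ = ∫ ω, Real.exp (θ * ((isolCount ω : ℝ) - μ) / σ) ∂(gnp n p)) :
    ∀ θ, 0 ≤ θ → M θ ≤ Real.exp (H θ) := by
  intro θ hθ
  have hp' : p ∈ Set.Icc (0 : ℝ) 1 := Set.Ioo_subset_Icc_self hp
  have hσ₀ : 0 < σ := hσ ▸ sqrt_pos.2 (isolVariance_pos hn hp)
  obtain rfl : γ = isolGamma n p := funext hγ
  have hM' : M = fun θ => ∑ ω : EdgeIdx n → Bool,
      bernWeight p ω * exp (θ * ((isolCount ω - μ) / σ)) := funext fun θ => by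
    simp_rw [hM, gnp, integral_pi_bern hp', mul_div_assoc]
  have hH' : ∀ θ, HasDerivAt H (μ / (2 * σ ^ 2) * (θ * isolGamma n p (θ / σ))) θ := fun θ => by
    rw [funext hH]
    refine ((Continuous.integral_hasStrictDerivAt ?_ 0 θ).hasDerivAt).const_mul _
    unfold isolGamma; fun_prop
  have hbound := le_mul_exp_sub_of_hasDerivAt_le_mul
    (fun θ => hM' ▸ hasDerivAt_sum_mul_exp_mul _ _ _ θ) hH'
    (fun θ hθ => hM' ▸ sum_bernWeight_mul_standardized_mul_exp_le hn hp' hμ hσ₀ hθ.le) hθ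
  simpa [hM', hH 0, sum_bernWeight] using hbound

end ErdosRenyiIsolated
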